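/- In a residuated lattice A, the α-filters form a frame: for any α-filter F and family {G_i} of α-filters, F ∩ (⋁^α_i G_i) = ⋁^α_i (F ∩ G_i), where ⋁^α denotes the join in the complete lattice of α-filters. -/

import Mathlib

/-- A (bounded, integral, commutative) residuated lattice. -/
class ResLattice (A : Type*) extends Lattice A, CommMonoid A, OrderBot A where
  himp : A → A → A
  adjunction : ∀ x y z : A, x * y ≤ z ↔ x ≤ himp y z
  le_one : ∀ x : A, x ≤ 1

variable {A : Type*} [ResLattice A]

/-- Coannihilator of a subset: `X^⊥ = {a | a ⊔ x = 1 for all x ∈ X}`. -/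
def Coann (X : Set A) : Set A := {a | ∀ x ∈ X, a ⊔ x = 1}

/-- Coannulet of an element: `x^⊥`. -/
def rperp (x : A) : Set A := Coann {x}

/-- The principal filter generated by `x`. -/
def PFil (x : A) : Set A := {a | ∃ n : ℕ, 0 < n ∧ x ^ n ≤ a}

/-- Filters of a residuated lattice. -/
def IsRLFilter (F : Set A) : Prop :=
  F.Nonempty ∧ (∀ x ∈ F, ∀ y ∈ F, x * y ∈ F) ∧ (∀ x ∈ F, ∀ y : A, x ⊔ y ∈ F)

/-- Prime filters. -/
def IsRLPrime (P : Set A) : Prop :=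
  IsRLFilter P ∧ P ≠ Set.univ ∧ ∀ x y : A, x ⊔ y ∈ P → x ∈ P ∨ y ∈ P

/-- Minimal prime filters. -/
def IsRLMinPrime (P : Set A) : Prop :=
  IsRLPrime P ∧ ∀ Q : Set A, IsRLPrime Q → Q ⊆ P → Q = P

/-- Quasicomplemented residuated lattice. -/
def Quasicomplemented (A : Type*) [ResLattice A] : Prop :=
  ∀ x : A, ∃ y : A, Coann (rperp x) = rperp y

/-- α-filters. -/
def IsAlphaFilter (F : Set A) : Prop :=
  IsRLFilter F ∧ ∀ x ∈ F, Coann (rperp x) ⊆ F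

/-- The α-filter generated by a subset. -/
def alphaGen (X : Set A) : Set A := ⋂₀ {G : Set A | IsAlphaFilter G ∧ X ⊆ G}

/-!
The α-filter generated by `X` is `{a | a ∈ p^⊥⊥ for some finite product p of elements of X}`.
If `a ∈ F` lies in the α-filter generated by `⋃ i, G i`, witnessed by `p = x₁ ⋯ xₙ` with
`xₖ ∈ G iₖ`, then each `a ⊔ xₖ` lies in `F ∩ G iₖ`, and `(a ⊔ x₁) ⋯ (a ⊔ xₙ) ≤ a ⊔ p`
forces `a` into `((a ⊔ x₁) ⋯ (a ⊔ xₙ))^⊥⊥`.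
-/

namespace ResLattice

instance : IsOrderedMonoid A where
  mul_le_mul_left _ _ h _ := (adjunction _ _ _).2 (h.trans ((adjunction _ _ _).1 le_rfl))

theorem sup_mul (a b c : A) : (a ⊔ b) * c = a * c ⊔ b * c := by
  refine le_antisymm ?_ (sup_le (mul_le_mul_left le_sup_left c) (mul_le_mul_left le_sup_right c))
  rw [adjunction]
  exact sup_le ((adjunction _ _ _).1 le_sup_left) ((adjunction _ _ _).1 le_sup_right)

theorem mul_sup (a b c : A) : a * (b ⊔ c) = a * b ⊔ a * c := by
  simp only [mul_comm a, sup_mul]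

theorem sup_one (a : A) : a ⊔ 1 = 1 := sup_eq_right.2 (le_one a)

theorem sup_mul_sup_le (a x y : A) : (a ⊔ x) * (a ⊔ y) ≤ a ⊔ x * y := by
  rw [sup_mul, mul_sup x]
  exact sup_le (mul_le_of_le_one_right' (le_one _) |>.trans le_sup_left)
    (sup_le (mul_le_of_le_one_left' (le_one _) |>.trans le_sup_left) le_sup_right)

theorem prod_map_sup_le (a : A) (L : List A) : (L.map (a ⊔ ·)).prod ≤ a ⊔ L.prod := by
  induction L with
  | nil => simp [sup_one]
  | cons x L ih =>
    simp only [List.map_cons, List.prod_cons]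
    exact (mul_le_mul_right ih _).trans (sup_mul_sup_le a x L.prod)

end ResLattice

open ResLattice

theorem mem_rperp {b p : A} : b ∈ rperp p ↔ b ⊔ p = 1 := by
  simp [rperp, Coann]

theorem mem_coann_rperp_of_le_sup {a p q : A} (ha : a ∈ Coann (rperp p)) (hq : q ≤ a ⊔ p) :
    a ∈ Coann (rperp q) := by
  intro b hb
  rw [mem_rperp] at hb
  have hab : (a ⊔ b) ⊔ p = 1 :=
    le_antisymm (le_one _) (hb ▸ by rw [sup_comm a b, sup_assoc]; exact sup_le_sup_left hq b)
  simpa using ha (a ⊔ b) (mem_rperp.2 hab)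

theorem isAlphaFilter_coann (S : Set A) : IsAlphaFilter (Coann S) := by
  refine ⟨⟨⟨1, fun s _ => sup_comm (1 : A) s ▸ sup_one s⟩, ?_, ?_⟩, ?_⟩
  · intro a ha b hb s hs
    refine le_antisymm (le_one _) ?_
    calc (1 : A) = (s ⊔ a) * (s ⊔ b) := by
          rw [sup_comm s a, sup_comm s b, ha s hs, hb s hs, one_mul]
      _ ≤ s ⊔ a * b := sup_mul_sup_le s a b
      _ = a * b ⊔ s := sup_comm _ _
  · intro a ha y s hs
    exact le_antisymm (le_one _) ((ha s hs).ge.trans (sup_le_sup_right le_sup_left s))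
  · intro a ha b hb s hs
    exact hb s (mem_rperp.2 (sup_comm a s ▸ ha s hs))

theorem IsRLFilter.one_mem {F : Set A} (hF : IsRLFilter F) : (1 : A) ∈ F := by
  obtain ⟨x, hx⟩ := hF.1
  simpa [sup_one] using hF.2.2 x hx 1

theorem IsRLFilter.list_prod_mem {F : Set A} (hF : IsRLFilter F) {L : List A}
    (hL : ∀ x ∈ L, x ∈ F) : L.prod ∈ F := by
  induction L with
  | nil => simpa using hF.one_mem
  | cons x L ih =>
    simp only [List.mem_cons, forall_eq_or_imp] at hL
    exact hF.2.1 x hL.1 _ (ih hL.2)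

theorem alphaGen_subset {X H : Set A} (hH : IsAlphaFilter H) (hXH : X ⊆ H) : alphaGen X ⊆ H :=
  Set.sInter_subset_of_mem ⟨hH, hXH⟩

theorem alphaGen_mono {X Y : Set A} (hXY : X ⊆ Y) : alphaGen X ⊆ alphaGen Y :=
  Set.sInter_subset_sInter fun _ ⟨hH, hYH⟩ => ⟨hH, hXY.trans hYH⟩

def alphaClosure (X : Set A) : Set A :=
  {a | ∃ L : List A, (∀ x ∈ L, x ∈ X) ∧ a ∈ Coann (rperp L.prod)}

theorem subset_alphaClosure (X : Set A) : X ⊆ alphaClosure X := fun x hx =>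
  ⟨[x], by simpa using hx, fun b hb => by
    rw [List.prod_singleton, mem_rperp] at hb
    rw [sup_comm, hb]⟩

theorem isAlphaFilter_alphaClosure (X : Set A) : IsAlphaFilter (alphaClosure X) := by
  refine ⟨⟨⟨1, [], by simp, ?_⟩, ?_, ?_⟩, ?_⟩
  · simpa using (isAlphaFilter_coann (rperp (1 : A))).1.one_mem
  · rintro a ⟨L, hL, ha⟩ b ⟨L', hL', hb⟩
    refine ⟨L ++ L', fun x hx => (List.mem_append.1 hx).elim (hL x) (hL' x), ?_⟩
    rw [List.prod_append]
    exact (isAlphaFilter_coann _).1.2.1 a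
      (mem_coann_rperp_of_le_sup ha (mul_le_of_le_one_right' (le_one _) |>.trans le_sup_right)) b
      (mem_coann_rperp_of_le_sup hb (mul_le_of_le_one_left' (le_one _) |>.trans le_sup_right))
  · rintro a ⟨L, hL, ha⟩ y
    exact ⟨L, hL, (isAlphaFilter_coann _).1.2.2 a ha y⟩
  · rintro a ⟨L, hL, ha⟩ b hb
    exact ⟨L, hL, (isAlphaFilter_coann _).2 a ha hb⟩

theorem alphaClosure_subset {X H : Set A} (hH : IsAlphaFilter H) (hXH : X ⊆ H) :
    alphaClosure X ⊆ H := by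
  rintro a ⟨L, hL, ha⟩
  exact hH.2 L.prod (hH.1.list_prod_mem fun x hx => hXH (hL x hx)) ha

theorem alphaGen_eq_alphaClosure (X : Set A) : alphaGen X = alphaClosure X :=
  (alphaGen_subset (isAlphaFilter_alphaClosure X) (subset_alphaClosure X)).antisymm
    fun _ ha _ ⟨hH, hXH⟩ => alphaClosure_subset hH hXH ha

theorem stmt10 {ι : Type*} (F : Set A) (hF : IsAlphaFilter F)
    (G : ι → Set A) (hG : ∀ i, IsAlphaFilter (G i)) :
    F ∩ alphaGen (⋃ i, G i) = alphaGen (⋃ i, F ∩ G i) := by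
  refine Set.Subset.antisymm ?_ (Set.subset_inter
    (alphaGen_subset hF (Set.iUnion_subset fun i => Set.inter_subset_left))
    (alphaGen_mono (Set.iUnion_mono fun i => Set.inter_subset_right)))
  rintro a ⟨haF, haG⟩
  rw [alphaGen_eq_alphaClosure] at haG ⊢
  obtain ⟨L, hL, ha⟩ := haG
  refine ⟨L.map (a ⊔ ·), ?_, mem_coann_rperp_of_le_sup ha (prod_map_sup_le a L)⟩
  simp only [List.mem_map, forall_exists_index, and_imp, forall_apply_eq_imp_iff₂]
  intro x hx
  obtain ⟨i, hxi⟩ := Set.mem_iUnion.1 (hL x hx)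
  exact Set.mem_iUnion.2 ⟨i, hF.1.2.2 a haF x, sup_comm x a ▸ (hG i).1.2.2 x hxi a⟩
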